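/- arXiv:2101.10990 — 4 statements merged into one kernel-verified Lean document; each statement's English description precedes it below -/
import Mathlib

section
/- Let n, k be integers and define binom(n,k) = 0 for k < 0 and the usual binomial coefficient (extended to negative n via binom(n,k) = n(n-1)...(n-k+1)/k! for k ≥ 0). Then binom(n,k) - binom(n,n-k) = (-1)^k * binom(k-n-1, -n-1) for all integers n and k. -/
/-!
For `k ≥ 0`, `ibinom n k` is Mathlib's `Ring.choose (n : ℚ) k`, so Pascal symmetry (for `n ≥ 0`)
and upper negation `binom(n, k) = (-1)^k binom(k - n - 1, k)` are available. For `n ≥ 0` the left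
side vanishes by symmetry and the right side has a negative lower index. For `n < 0` at most one
term on the left survives (`binom(n, k)` when `k ≥ 0`, `binom(n, n - k)` when `k ≤ n`, none in
between, where the right side vanishes too), and upper negation followed by symmetry turns it into
the right side.
-/

/-- Generalized binomial coefficient `binom(n,k)` for integers `n, k`:
`n(n-1)⋯(n-k+1)/k!` for `k ≥ 0`, and `0` for `k < 0`. -/
noncomputable def ibinom (n k : ℤ) : ℚ :=
  if k < 0 then 0
  else (∏ i ∈ Finset.range k.toNat, ((n : ℚ) - i)) / (Nat.factorial k.toNat : ℚ)

lemma ibinom_of_neg (n : ℤ) {k : ℤ} (hk : k < 0) : ibinom n k = 0 := if_pos hk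

lemma ibinom_natCast (n : ℤ) (k : ℕ) : ibinom n k = Ring.choose (n : ℚ) k := by
  rw [ibinom, if_neg (by omega), Int.toNat_natCast, Ring.choose_eq_smul,
    ← Polynomial.aeval_eq_smeval, Polynomial.aeval_def, ← Polynomial.eval_map, descPochhammer_map,
    descPochhammer_eval_eq_prod_range, smul_eq_mul, inv_mul_eq_div]

lemma ibinom_natCast_natCast (m k : ℕ) : ibinom m k = m.choose k := by
  rw [ibinom_natCast, Int.cast_natCast, Ring.choose_natCast]

lemma ibinom_eq_zero_of_lt {m k : ℤ} (hm : 0 ≤ m) (h : m < k) : ibinom m k = 0 := by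
  lift m to ℕ using hm
  lift k to ℕ using by omega
  rw [ibinom_natCast_natCast, Nat.choose_eq_zero_of_lt (by omega), Nat.cast_zero]

lemma ibinom_self_sub {m : ℤ} (hm : 0 ≤ m) (k : ℤ) : ibinom m (m - k) = ibinom m k := by
  rcases lt_or_ge k 0 with hk | hk
  · rw [ibinom_of_neg m hk, ibinom_eq_zero_of_lt hm (by omega)]
  rcases lt_or_ge m k with hmk | hkm
  · rw [ibinom_of_neg m (by omega), ibinom_eq_zero_of_lt hm hmk]
  lift m to ℕ using hm
  lift k to ℕ using hk
  rw [← Nat.cast_sub (by omega), ibinom_natCast_natCast, ibinom_natCast_natCast,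
    Nat.choose_symm (by omega)]

lemma ibinom_upper_neg (n : ℤ) {k : ℤ} (hk : 0 ≤ k) :
    ibinom n k = (-1) ^ k * ibinom (k - n - 1) k := by
  lift k to ℕ using hk
  rw [ibinom_natCast, ibinom_natCast, ← neg_neg (n : ℚ), Ring.choose_neg, Units.smul_def,
    zsmul_eq_mul, Int.cast_negOnePow_natCast, zpow_natCast]
  push_cast
  ring_nf

lemma neg_one_zpow_sub_sub_one (a b : ℤ) : (-1 : ℚ) ^ (a - b - 1) = -(-1) ^ (b - a) := by
  rw [← Int.cast_negOnePow, ← Int.cast_negOnePow, Int.negOnePow_sub, Int.negOnePow_sub,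
    Int.negOnePow_one, Int.negOnePow_sub b a]
  push_cast
  ring

theorem binom_reflection_identity (n k : ℤ) :
    ibinom n k - ibinom n (n - k) = (-1 : ℚ) ^ k * ibinom (k - n - 1) (-n - 1) := by
  rcases le_or_gt 0 n with hn | hn
  · rw [ibinom_self_sub hn, sub_self, ibinom_of_neg _ (by omega : -n - 1 < 0), mul_zero]
  rcases le_or_gt 0 k with hk | hk
  · rw [ibinom_of_neg n (by omega : n - k < 0), sub_zero, ibinom_upper_neg n hk,
      ← ibinom_self_sub (by omega : 0 ≤ k - n - 1) k, show k - n - 1 - k = -n - 1 by ring]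
  rcases lt_or_ge n k with hnk | hkn
  · rw [ibinom_of_neg n hk, ibinom_of_neg n (by omega : n - k < 0),
      ibinom_eq_zero_of_lt (by omega : 0 ≤ k - n - 1) (by omega : k - n - 1 < -n - 1),
      sub_zero, mul_zero]
  calc ibinom n k - ibinom n (n - k)
      = -((-1) ^ (n - k) * ibinom (-k - 1) (n - k)) := by
        rw [ibinom_of_neg n hk, ibinom_upper_neg n (by omega : 0 ≤ n - k),
          show n - k - n - 1 = -k - 1 by ring, zero_sub]
    _ = (-1) ^ (k - n - 1) * ibinom (-k - 1) (-n - 1) := by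
        rw [neg_one_zpow_sub_sub_one, ← ibinom_self_sub (by omega : 0 ≤ -k - 1) (-n - 1),
          show -k - 1 - (-n - 1) = n - k by ring, neg_mul]
    _ = (-1) ^ k * ibinom (k - n - 1) (-n - 1) := by
        rw [ibinom_upper_neg (k - n - 1) (by omega : 0 ≤ -n - 1),
          show -n - 1 - (k - n - 1) - 1 = -k - 1 by ring, ← mul_assoc, ← zpow_add₀ (by norm_num),
          show k + (-n - 1) = k - n - 1 by ring]
end

section
/- Let R = ℚ[z₀, z₁, z₂, …] be bigraded with |z_k| = (1,k), ∂ the derivation with ∂(z_k) = z_{k-1} (k ≥ 1), ∂(z₀) = 0, γ = ∑_{k≥0} (-1)^k z_k ∂^k, and ε the constant-term homomorphism. For every bidegree (d,e) ≠ (0,0), the sequence R^{d-1,e} →^γ R^{d,e} →^∂ R^{d,e-1} →^ε ℚ[0]^{d,e-1} → 0 is exact, where ℚ[0]^{d,e-1} is ℚ if (d,e-1) = (0,0) and 0 otherwise. -/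
open MvPolynomial

/-- A polynomial in `R = ℚ[z₀, z₁, …]` is bihomogeneous of bidegree `(d, e)` if every
monomial `z_{k₁}⋯z_{k_d}` in it has total degree `d` and weight `k₁ + … + k_d = e`. -/
def Bihom (d e : ℤ) (P : MvPolynomial ℕ ℚ) : Prop :=
  ∀ m ∈ P.support, (m.sum fun _ n => (n : ℤ)) = d ∧ (m.sum fun k n => (k : ℤ) * n) = e

/-- `γ = ∑_{k≥0} (-1)^k z_k ∂^k` (a finite sum on each element). -/
noncomputable def gammaMap (D : Derivation ℚ (MvPolynomial ℕ ℚ) (MvPolynomial ℕ ℚ))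
    (P : MvPolynomial ℕ ℚ) : MvPolynomial ℕ ℚ :=
  ∑ᶠ k : ℕ, ((-1 : ℚ) ^ k) • (X k * (⇑D)^[k] P)

/-!
Write `∂` for the lowering derivation, `E z_k = (k+1) z_{k+1}` for the raising one and `N` for
the Euler derivation. Then `[∂, E] = N`, `N` commutes with `∂` and `E`, and `N` acts on
`R^{d,•}` as multiplication by `d`. As `∂` is locally nilpotent,
`∑ᵢ (-1)ⁱ / (dⁱ⁺¹ (i+1)!) Eⁱ⁺¹ ∂ⁱ` is a right inverse of `∂` on `R^{d,•}` for `d ≠ 0`. This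
gives exactness at `R^{d,e-1}`; in degree `d = 0` everything is constant.

`∂ γ = 0` because the sum telescopes. To prove `ker ∂ ⊆ im γ`, induct on the weight. The algebra
map `φ : z₀ ↦ 0, z_{k+1} ↦ z_k` commutes with `∂`, maps `R^{d,e}` to `R^{d,e-d}` and satisfies
`φ γ = -γ ∂ φ`. For `K ∈ ker ∂`, induction gives `φ K = γ Q₁`, and surjectivity of `∂` gives
`Q₁ = ∂ Q₂`. Then `K - γ(-ψ Q₂)`, with `ψ z_k = z_{k+1}`, lies in `ker φ = z₀ R`, say it equals
`z₀ K₁`. Now `∂ K₁ = 0`, and hence `z₀ K₁ = γ K₁`.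
-/

open Finset
open scoped Nat

theorem Finsupp.sub_single_one_add_cancel {σ : Type*} {s : σ →₀ ℕ} {i : σ}
    (hi : i ∈ s.support) : s - Finsupp.single i 1 + Finsupp.single i 1 = s :=
  tsub_add_cancel_of_le <| Finsupp.single_le_iff.mpr <| Nat.one_le_iff_ne_zero.mpr <|
    Finsupp.mem_support_iff.mp hi

theorem iterate_eq_zero_of_le {M F : Type*} [AddMonoid M] [FunLike F M M]
    [AddMonoidHomClass F M M] {f : F} {x : M} {m n : ℕ} (hm : f^[m] x = 0) (h : m ≤ n) :
    f^[n] x = 0 := by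
  rw [← Nat.sub_add_cancel h, Function.iterate_add_apply, hm, iterate_map_zero]

namespace MvPolynomial

variable {σ R M : Type*} [CommSemiring R] [AddCommMonoid M] {w : σ → M}

theorem derivation_monomial (D : Derivation R (MvPolynomial σ R) (MvPolynomial σ R))
    (s : σ →₀ ℕ) (r : R) :
    D (monomial s r) =
      r • s.sum fun i k => monomial (s - Finsupp.single i 1) (k : R) • D (X i) := by
  have hD : mkDerivation R (fun i => D (X i)) = D := derivation_ext fun i => by simp
  exact (congrArg (· (monomial s r)) hD).symm.trans (mkDerivation_monomial R _ s r)

theorem IsWeightedHomogeneous.derivation {t : M}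
    (D : Derivation R (MvPolynomial σ R) (MvPolynomial σ R))
    (hD : ∀ i, IsWeightedHomogeneous w (D (X i)) (w i + t)) {P : MvPolynomial σ R} {m : M}
    (hP : IsWeightedHomogeneous w P m) : IsWeightedHomogeneous w (D P) (m + t) := by
  induction hP using IsWeightedHomogeneous.induction_on with
  | zero => simpa using isWeightedHomogeneous_zero R w _
  | add p q _ _ hp hq => simpa using hp.add hq
  | monomial s r hs =>
    rw [derivation_monomial]
    refine (weightedHomogeneousSubmodule R w _).smul_mem r
      (IsWeightedHomogeneous.sum _ _ _ fun i hi => ?_)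
    have hw := congrArg (Finsupp.weight w) (Finsupp.sub_single_one_add_cancel hi)
    rw [map_add, Finsupp.weight_single, one_smul] at hw
    rw [← hs, ← hw, add_assoc]
    exact (isWeightedHomogeneous_monomial _ _ _ rfl).mul (hD i)

theorem IsWeightedHomogeneous.derivation_eq_smul (f : M →+ R)
    (N : Derivation R (MvPolynomial σ R) (MvPolynomial σ R)) (hN : ∀ i, N (X i) = f (w i) • X i)
    {P : MvPolynomial σ R} {m : M} (hP : IsWeightedHomogeneous w P m) : N P = f m • P := by
  induction hP using IsWeightedHomogeneous.induction_on with
  | zero => simp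
  | add p q _ _ hp hq => simp [hp, hq, smul_add]
  | monomial s r hs =>
    rw [derivation_monomial, ← hs, Finsupp.weight_apply, map_finsuppSum, Finsupp.sum,
      Finsupp.sum, smul_sum, sum_smul]
    refine sum_congr rfl fun i hi => ?_
    rw [hN, X, smul_monomial, smul_eq_mul, monomial_mul, Finsupp.sub_single_one_add_cancel hi,
      smul_monomial, smul_monomial, map_nsmul]
    congr 1
    simp only [smul_eq_mul, nsmul_eq_mul, mul_one]
    ring

theorem IsWeightedHomogeneous.aeval {τ M' : Type*} [AddCommMonoid M'] {w' : τ → M'}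
    (L : M →+ M') (g : σ → MvPolynomial τ R) (hg : ∀ i, IsWeightedHomogeneous w' (g i) (L (w i)))
    {P : MvPolynomial σ R} {m : M} (hP : IsWeightedHomogeneous w P m) :
    IsWeightedHomogeneous w' (aeval g P) (L m) := by
  induction hP using IsWeightedHomogeneous.induction_on with
  | zero => simpa using isWeightedHomogeneous_zero R w' _
  | add p q _ _ hp hq => simpa using hp.add hq
  | monomial s r hs =>
    rw [aeval_monomial, ← hs, Finsupp.weight_apply, map_finsuppSum, algebraMap_eq]
    exact (IsWeightedHomogeneous.prod _ _ _ fun i _ => by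
      simpa only [map_nsmul] using (hg i).pow _).C_mul r

theorem IsWeightedHomogeneous.of_X_mul {M : Type*} [AddCancelCommMonoid M] {w : σ → M}
    {P : MvPolynomial σ R} {i : σ} {m : M} (h : IsWeightedHomogeneous w (X i * P) (w i + m)) :
    IsWeightedHomogeneous w P m := by
  intro s hs
  have := h (d := Finsupp.single i 1 + s) (by rwa [coeff_X_mul])
  rwa [map_add, Finsupp.weight_single, one_smul, add_right_inj] at this

end MvPolynomial

namespace Module.End

theorem pow_succ_apply' {R M : Type*} [Semiring R] [AddCommMonoid M] [Module R M]
    (f : Module.End R M) (n : ℕ) (x : M) : (f ^ (n + 1)) x = f ((f ^ n) x) := by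
  rw [pow_succ', mul_apply]

theorem apply_pow_succ_apply_of_lie_eq {K V : Type*} [CommRing K] [AddCommGroup V] [Module K V]
    {D E N : Module.End K V} {c : K} {v : V} (hDE : ⁅D, E⁆ = N) (hNE : Commute N E)
    (hv : N v = c • v) (i : ℕ) :
    D ((E ^ (i + 1)) v) = (E ^ (i + 1)) (D v) + ((i + 1 : K) * c) • (E ^ i) v := by
  have hDE' : ∀ x, D (E x) = E (D x) + N x := fun x => by
    rw [← hDE, Ring.lie_def]; simp
  induction i with
  | zero => simp [hDE', hv]
  | succ i ih =>
    have hNv : N ((E ^ (i + 1)) v) = c • (E ^ (i + 1)) v := by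
      rw [← mul_apply, (hNE.pow_right _).eq, mul_apply, hv, map_smul]
    rw [pow_succ_apply', hDE', ih, hNv, map_add, map_smul, ← pow_succ_apply', ← pow_succ_apply']
    push_cast
    module

theorem apply_sum_eq_of_lie_eq {K V : Type*} [Field K] [CharZero K] [AddCommGroup V] [Module K V]
    {D E N : Module.End K V} {c : K} {v : V} (hDE : ⁅D, E⁆ = N) (hND : Commute N D)
    (hNE : Commute N E) (hc : c ≠ 0) (hv : N v = c • v) {n : ℕ} (hn : (D ^ n) v = 0) :
    D (∑ i ∈ range n, ((-1) ^ i / (c ^ (i + 1) * (i + 1)!) : K) • (E ^ (i + 1)) ((D ^ i) v)) =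
      v := by
  set a : ℕ → K := fun i => (-1) ^ i / (c ^ (i + 1) * (i + 1)!)
  set t : ℕ → V := fun i => a i • (E ^ (i + 1)) ((D ^ (i + 1)) v)
  have hterm : ∀ i, D (a i • (E ^ (i + 1)) ((D ^ i) v)) =
      t i + (a i * ((i + 1 : K) * c)) • (E ^ i) ((D ^ i) v) := fun i => by
    have hNv : N ((D ^ i) v) = c • (D ^ i) v := by
      rw [← mul_apply, (hND.pow_right _).eq, mul_apply, hv, map_smul]
    rw [map_smul, apply_pow_succ_apply_of_lie_eq hDE hNE hNv, ← pow_succ_apply', smul_add,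
      smul_smul]
  have ha0 : a 0 * ((0 + 1 : K) * c) = 1 := by simp [a, hc]
  have ha : ∀ i, a (i + 1) * (((i + 1 : ℕ) + 1 : K) * c) = -a i := fun i => by
    have h1 : ((i + 1)! : K) ≠ 0 := Nat.cast_ne_zero.mpr (Nat.factorial_ne_zero _)
    have h2 : (i : K) + 1 + 1 ≠ 0 := by exact_mod_cast Nat.succ_ne_zero (i + 1)
    simp only [a, Nat.factorial_succ (i + 1)]
    push_cast
    field_simp
    ring
  rcases n with _ | m
  · simpa using hn.symm
  rw [map_sum, sum_range_succ', hterm 0, sum_congr rfl fun k _ => hterm (k + 1),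
    Nat.cast_zero, ha0, one_smul]
  simp_rw [ha, neg_smul, ← sub_eq_add_neg]
  rw [sum_range_sub (f := t)]
  simp [t, hn]

end Module.End

namespace Bigraded

/-- The bidegree of `z_k`: `R^{d,e}` is `weightedHomogeneousSubmodule ℚ bideg (d, e)`. -/
abbrev bideg (k : ℕ) : ℤ × ℤ := (1, k)

theorem weight_bideg (s : ℕ →₀ ℕ) :
    Finsupp.weight bideg s = (s.sum fun _ n => (n : ℤ), s.sum fun k n => (k : ℤ) * n) := by
  simp [Finsupp.weight_apply, Finsupp.sum, Prod.ext_iff, Prod.fst_sum, Prod.snd_sum, mul_comm]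

theorem bihom_iff {d e : ℤ} {P : MvPolynomial ℕ ℚ} :
    Bihom d e P ↔ IsWeightedHomogeneous bideg P (d, e) := by
  simp [Bihom, IsWeightedHomogeneous, weight_bideg, Prod.ext_iff]

variable {P Q K : MvPolynomial ℕ ℚ} {d e : ℤ}

theorem nonneg_of_isWeightedHomogeneous (hP : IsWeightedHomogeneous bideg P (d, e))
    (hP0 : P ≠ 0) : 0 ≤ d ∧ 0 ≤ e := by
  obtain ⟨s, hs⟩ := exists_coeff_ne_zero hP0
  have h := hP hs
  rw [weight_bideg, Prod.mk.injEq] at h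
  exact ⟨h.1 ▸ sum_nonneg fun _ _ => by positivity, h.2 ▸ sum_nonneg fun _ _ => by positivity⟩

theorem eq_C_of_isWeightedHomogeneous_zero (hP : IsWeightedHomogeneous bideg P (0, e)) :
    P = C (constantCoeff P) := by
  rw [constantCoeff_eq, C_apply]
  refine hP.eq_monomial_of_unique_weight fun s hs => ?_
  rw [weight_bideg, Prod.mk.injEq] at hs
  rw [← Finsupp.degree_eq_zero_iff, ← Nat.cast_eq_zero (R := ℤ), Finsupp.degree_apply]
  simpa [Finsupp.sum] using hs.1

theorem eq_zero_of_isWeightedHomogeneous_zero (hP : IsWeightedHomogeneous bideg P (0, e))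
    (he : e ≠ 0) : P = 0 := by
  by_contra hP0
  have hC : IsWeightedHomogeneous bideg P 0 := by
    rw [eq_C_of_isWeightedHomogeneous_zero hP]; exact isWeightedHomogeneous_C _ _
  exact he (congrArg Prod.snd (IsWeightedHomogeneous.inj_right hP0 hP hC))

noncomputable def lowering : Derivation ℚ (MvPolynomial ℕ ℚ) (MvPolynomial ℕ ℚ) :=
  mkDerivation ℚ fun | 0 => 0 | k + 1 => X k

noncomputable def raising : Derivation ℚ (MvPolynomial ℕ ℚ) (MvPolynomial ℕ ℚ) :=
  mkDerivation ℚ fun k => ((k : ℚ) + 1) • X (k + 1)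

noncomputable def eulerDerivation : Derivation ℚ (MvPolynomial ℕ ℚ) (MvPolynomial ℕ ℚ) :=
  mkDerivation ℚ X

@[simp] theorem lowering_X_zero : lowering (X 0) = 0 := mkDerivation_X ..

@[simp] theorem lowering_X_succ (k : ℕ) : lowering (X (k + 1)) = X k := mkDerivation_X ..

@[simp] theorem raising_X (k : ℕ) : raising (X k) = ((k : ℚ) + 1) • X (k + 1) :=
  mkDerivation_X ..

@[simp] theorem eulerDerivation_X (k : ℕ) : eulerDerivation (X k) = X k := mkDerivation_X ..

theorem lie_lowering_raising : ⁅lowering, raising⁆ = eulerDerivation :=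
  derivation_ext fun k => by
    rcases k with _ | k <;> simp [Derivation.commutator_apply, add_smul]

theorem lie_eulerDerivation_lowering : ⁅eulerDerivation, lowering⁆ = 0 :=
  derivation_ext fun k => by rcases k with _ | k <;> simp [Derivation.commutator_apply]

theorem lie_eulerDerivation_raising : ⁅eulerDerivation, raising⁆ = 0 :=
  derivation_ext fun k => by simp [Derivation.commutator_apply]

theorem isWeightedHomogeneous_lowering (hP : IsWeightedHomogeneous bideg P (d, e)) :
    IsWeightedHomogeneous bideg (lowering P) (d, e - 1) := by
  have := hP.derivation (t := (0, -1)) lowering fun k => by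
    rcases k with _ | k
    · simpa using isWeightedHomogeneous_zero ℚ bideg _
    · simpa [sub_eq_add_neg] using isWeightedHomogeneous_X ℚ bideg k
  simpa [sub_eq_add_neg] using this

theorem isWeightedHomogeneous_raising (hP : IsWeightedHomogeneous bideg P (d, e)) :
    IsWeightedHomogeneous bideg (raising P) (d, e + 1) := by
  have := hP.derivation (t := (0, 1)) raising fun k => by
    rw [raising_X, smul_eq_C_mul]
    simpa [bideg] using (isWeightedHomogeneous_X ℚ bideg (k + 1)).C_mul ((k : ℚ) + 1)
  simpa using this

theorem isWeightedHomogeneous_lowering_iterate (hP : IsWeightedHomogeneous bideg P (d, e))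
    (k : ℕ) : IsWeightedHomogeneous bideg (lowering^[k] P) (d, e - k) := by
  induction k with
  | zero => simpa using hP
  | succ k ih =>
    rw [Function.iterate_succ_apply']
    simpa [sub_add_eq_sub_sub] using isWeightedHomogeneous_lowering ih

theorem isWeightedHomogeneous_raising_iterate (hP : IsWeightedHomogeneous bideg P (d, e))
    (k : ℕ) : IsWeightedHomogeneous bideg (raising^[k] P) (d, e + k) := by
  induction k with
  | zero => simpa using hP
  | succ k ih =>
    rw [Function.iterate_succ_apply']
    simpa [add_assoc] using isWeightedHomogeneous_raising ih

theorem eulerDerivation_eq_smul (hP : IsWeightedHomogeneous bideg P (d, e)) :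
    eulerDerivation P = (d : ℚ) • P :=
  hP.derivation_eq_smul ((Int.castAddHom ℚ).comp (AddMonoidHom.fst ℤ ℤ)) _ fun k => by simp

theorem lowering_iterate_eq_zero (hP : IsWeightedHomogeneous bideg P (d, e)) {k : ℕ}
    (hk : e < k) : lowering^[k] P = 0 := by
  by_contra h
  have := (nonneg_of_isWeightedHomogeneous (isWeightedHomogeneous_lowering_iterate hP k) h).2
  omega

theorem exists_lowering_iterate_eq_zero (P : MvPolynomial ℕ ℚ) : ∃ n, lowering^[n] P = 0 := by
  induction P using MvPolynomial.induction_on' with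
  | monomial s c =>
    exact ⟨(Finsupp.weight bideg s).2.toNat + 1, lowering_iterate_eq_zero
      (d := (Finsupp.weight bideg s).1) (e := (Finsupp.weight bideg s).2)
        (isWeightedHomogeneous_monomial _ _ c rfl) (by omega)⟩
  | add p q hp hq =>
    obtain ⟨m, hm⟩ := hp
    obtain ⟨n, hn⟩ := hq
    refine ⟨m + n, ?_⟩
    rw [iterate_map_add, iterate_eq_zero_of_le hm (m.le_add_right n),
      iterate_eq_zero_of_le hn (n.le_add_left m), add_zero]

theorem exists_lowering_eq (hP : IsWeightedHomogeneous bideg P (d, e))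
    (hε : (d, e) = (0, 0) → constantCoeff P = 0) :
    ∃ Q, IsWeightedHomogeneous bideg Q (d, e + 1) ∧ lowering Q = P := by
  rcases eq_or_ne d 0 with rfl | hd
  · refine ⟨0, isWeightedHomogeneous_zero ℚ bideg _, ?_⟩
    rcases eq_or_ne e 0 with rfl | he
    · rw [map_zero, eq_C_of_isWeightedHomogeneous_zero hP, hε rfl, C_0]
    · rw [map_zero, eq_zero_of_isWeightedHomogeneous_zero hP he]
  let D : Module.End ℚ (MvPolynomial ℕ ℚ) := lowering
  let E : Module.End ℚ (MvPolynomial ℕ ℚ) := raising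
  obtain ⟨n, hn⟩ := exists_lowering_iterate_eq_zero P
  refine ⟨∑ i ∈ range n,
      ((-1) ^ i / ((d : ℚ) ^ (i + 1) * (i + 1)!)) • (E ^ (i + 1)) ((D ^ i) P),
    IsWeightedHomogeneous.sum _ _ _ fun i _ => ?_, ?_⟩
  · refine (weightedHomogeneousSubmodule ℚ bideg _).smul_mem _ ?_
    rw [mem_weightedHomogeneousSubmodule]
    simp only [D, E, Module.End.pow_apply, Derivation.coeFn_coe]
    convert isWeightedHomogeneous_raising_iterate
      (isWeightedHomogeneous_lowering_iterate hP i) (i + 1) using 2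
    push_cast
    ring
  · let N : Module.End ℚ (MvPolynomial ℕ ℚ) := eulerDerivation
    have hDE : ⁅D, E⁆ = N := by
      rw [← Derivation.commutator_coe_linear_map, lie_lowering_raising]
    have hND : Commute N D := by
      rw [commute_iff_lie_eq, ← Derivation.commutator_coe_linear_map,
        lie_eulerDerivation_lowering]
      rfl
    have hNE : Commute N E := by
      rw [commute_iff_lie_eq, ← Derivation.commutator_coe_linear_map,
        lie_eulerDerivation_raising]
      rfl
    have hd' : (d : ℚ) ≠ 0 := Int.cast_ne_zero.mpr hd
    have hDn : (D ^ n) P = 0 := by simpa [D, Module.End.pow_apply] using hn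
    exact Module.End.apply_sum_eq_of_lie_eq hDE hND hNE hd' (eulerDerivation_eq_smul hP) hDn

theorem gammaMap_eq_sum (D : Derivation ℚ (MvPolynomial ℕ ℚ) (MvPolynomial ℕ ℚ)) {n : ℕ}
    (hn : D^[n] Q = 0) : gammaMap D Q = ∑ k ∈ range n, (-1 : ℚ) ^ k • (X k * D^[k] Q) := by
  refine finsum_eq_sum_of_support_subset _ fun k hk => mem_coe.mpr (mem_range.mpr ?_)
  by_contra hkn
  exact hk (by simp only [iterate_eq_zero_of_le hn (not_lt.mp hkn), mul_zero, smul_zero])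

theorem gammaMap_zero : gammaMap lowering 0 = 0 := by
  simpa using gammaMap_eq_sum lowering (Q := 0) (n := 0) rfl

theorem gammaMap_add (P Q : MvPolynomial ℕ ℚ) :
    gammaMap lowering (P + Q) = gammaMap lowering P + gammaMap lowering Q := by
  obtain ⟨m, hm⟩ := exists_lowering_iterate_eq_zero P
  obtain ⟨n, hn⟩ := exists_lowering_iterate_eq_zero Q
  have hP := iterate_eq_zero_of_le hm (le_max_left m n)
  have hQ := iterate_eq_zero_of_le hn (le_max_right m n)
  rw [gammaMap_eq_sum _ hP, gammaMap_eq_sum _ hQ,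
    gammaMap_eq_sum _ (by rw [iterate_map_add, hP, hQ, add_zero]), ← sum_add_distrib]
  simp only [iterate_map_add, mul_add, smul_add]

theorem gammaMap_neg (Q : MvPolynomial ℕ ℚ) : gammaMap lowering (-Q) = -gammaMap lowering Q :=
  eq_neg_of_add_eq_zero_left (by rw [← gammaMap_add, neg_add_cancel, gammaMap_zero])

theorem gammaMap_of_lowering_eq_zero (h : lowering Q = 0) : gammaMap lowering Q = X 0 * Q := by
  simp [gammaMap_eq_sum lowering (n := 1) h]

theorem lowering_gammaMap (Q : MvPolynomial ℕ ℚ) : lowering (gammaMap lowering Q) = 0 := by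
  obtain ⟨n, hn⟩ := exists_lowering_iterate_eq_zero Q
  set a : ℕ → MvPolynomial ℕ ℚ := fun k => (-1 : ℚ) ^ k • (X k * lowering^[k + 1] Q)
  have hstep : ∀ k, lowering ((-1 : ℚ) ^ (k + 1) • (X (k + 1) * lowering^[k + 1] Q)) =
      a (k + 1) - a k := fun k => by
    rw [Derivation.map_smul, Derivation.leibniz, lowering_X_succ, smul_eq_mul, smul_eq_mul,
      ← Function.iterate_succ_apply' lowering, mul_comm _ (X k), pow_succ]
    module
  have h0 : lowering ((-1 : ℚ) ^ 0 • (X 0 * lowering^[0] Q)) = a 0 := by simp [a]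
  have hna : a n = 0 := by
    simp only [a, iterate_eq_zero_of_le hn n.le_succ, mul_zero, smul_zero]
  rw [gammaMap_eq_sum _ (iterate_eq_zero_of_le hn n.le_succ), map_sum, sum_range_succ',
    sum_congr rfl fun k _ => hstep k, sum_range_sub, h0, hna]
  abel

theorem isWeightedHomogeneous_gammaMap (hQ : IsWeightedHomogeneous bideg Q (d, e)) :
    IsWeightedHomogeneous bideg (gammaMap lowering Q) (d + 1, e) := by
  rw [gammaMap_eq_sum _ (lowering_iterate_eq_zero hQ (k := e.toNat + 1) (by omega))]
  refine IsWeightedHomogeneous.sum _ _ _ fun k _ =>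
    (weightedHomogeneousSubmodule ℚ bideg _).smul_mem _ ?_
  rw [mem_weightedHomogeneousSubmodule]
  convert (isWeightedHomogeneous_X ℚ bideg k).mul (isWeightedHomogeneous_lowering_iterate hQ k)
    using 1
  simp [add_comm]

noncomputable def shiftDown : MvPolynomial ℕ ℚ →ₐ[ℚ] MvPolynomial ℕ ℚ :=
  aeval fun | 0 => 0 | k + 1 => X k

noncomputable def shiftUp : MvPolynomial ℕ ℚ →ₐ[ℚ] MvPolynomial ℕ ℚ :=
  aeval fun k => X (k + 1)

@[simp] theorem shiftDown_X_zero : shiftDown (X 0) = 0 := aeval_X ..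

@[simp] theorem shiftDown_X_succ (k : ℕ) : shiftDown (X (k + 1)) = X k := aeval_X ..

@[simp] theorem shiftUp_X (k : ℕ) : shiftUp (X k) = X (k + 1) := aeval_X ..

theorem shiftDown_shiftUp (P : MvPolynomial ℕ ℚ) : shiftDown (shiftUp P) = P := by
  rw [← AlgHom.comp_apply, show shiftDown.comp shiftUp = AlgHom.id ℚ _ from
    algHom_ext fun k => by simp, AlgHom.id_apply]

theorem shiftDown_lowering (P : MvPolynomial ℕ ℚ) :
    shiftDown (lowering P) = lowering (shiftDown P) := by
  induction P using MvPolynomial.induction_on with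
  | C a => simp
  | add p q hp hq => simp [hp, hq]
  | mul_X p k hp => rcases k with _ | _ | k <;> simp [hp]

theorem X_zero_dvd_of_shiftDown_eq_zero (h : shiftDown P = 0) : X 0 ∣ P := by
  -- `shiftUp ∘ shiftDown` substitutes `z₀ = 0`, which is the identity modulo `z₀`.
  let π := Ideal.Quotient.mkₐ ℚ (Ideal.span {(X 0 : MvPolynomial ℕ ℚ)})
  have hπ : π.comp (shiftUp.comp shiftDown) = π := algHom_ext fun k => by
    rcases k with _ | k
    · simp [π]
    · simp
  have := AlgHom.congr_fun hπ P
  simp only [AlgHom.comp_apply, h, map_zero] at this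
  exact Ideal.mem_span_singleton.mp (Ideal.Quotient.eq_zero_iff_mem.mp this.symm)

theorem isWeightedHomogeneous_shiftDown (hP : IsWeightedHomogeneous bideg P (d, e)) :
    IsWeightedHomogeneous bideg (shiftDown P) (d, e - d) := by
  let L := AddMonoidHom.id (ℤ × ℤ) - (AddMonoidHom.inr ℤ ℤ).comp (AddMonoidHom.fst ℤ ℤ)
  have hX : ∀ k, IsWeightedHomogeneous bideg
      ((fun | 0 => 0 | k + 1 => X k : ℕ → MvPolynomial ℕ ℚ) k) (L (bideg k)) := by
    rintro (_ | k)
    · exact isWeightedHomogeneous_zero ℚ bideg _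
    · simpa [L] using isWeightedHomogeneous_X ℚ bideg k
  have hL : L (d, e) = (d, e - d) := by simp [L, sub_eq_add_neg]
  rw [← hL]
  exact hP.aeval L _ hX

theorem isWeightedHomogeneous_shiftUp (hP : IsWeightedHomogeneous bideg P (d, e)) :
    IsWeightedHomogeneous bideg (shiftUp P) (d, e + d) := by
  let L := AddMonoidHom.id (ℤ × ℤ) + (AddMonoidHom.inr ℤ ℤ).comp (AddMonoidHom.fst ℤ ℤ)
  have hX (k : ℕ) :
      IsWeightedHomogeneous bideg (X (k + 1) : MvPolynomial ℕ ℚ) (L (bideg k)) := by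
    simpa [L, bideg] using isWeightedHomogeneous_X ℚ bideg (k + 1)
  have hL : L (d, e) = (d, e + d) := by simp [L]
  rw [← hL]
  exact hP.aeval L _ hX

theorem shiftDown_gammaMap (Q : MvPolynomial ℕ ℚ) :
    shiftDown (gammaMap lowering Q) = -gammaMap lowering (lowering (shiftDown Q)) := by
  obtain ⟨n, hn⟩ := exists_lowering_iterate_eq_zero Q
  have hcomm (k : ℕ) (P : MvPolynomial ℕ ℚ) :
      shiftDown (lowering^[k] P) = lowering^[k] (shiftDown P) :=
    Function.Commute.iterate_right (f := shiftDown) shiftDown_lowering k P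
  have hn' : lowering^[n] (lowering (shiftDown Q)) = 0 := by
    rw [← Function.iterate_succ_apply, ← hcomm, iterate_eq_zero_of_le hn n.le_succ, map_zero]
  rw [gammaMap_eq_sum _ (iterate_eq_zero_of_le hn n.le_succ), gammaMap_eq_sum _ hn', map_sum,
    sum_range_succ', ← sum_neg_distrib]
  simp only [map_smul, map_mul, map_neg, shiftDown_X_succ, shiftDown_X_zero, hcomm,
    shiftDown_lowering, zero_mul, smul_zero, add_zero, pow_succ, mul_neg_one, neg_smul,
    Function.iterate_succ_apply]

theorem constantCoeff_lowering (P : MvPolynomial ℕ ℚ) : constantCoeff (lowering P) = 0 := by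
  induction P using MvPolynomial.induction_on with
  | C a => simp
  | add p q hp hq => simp [hp, hq]
  | mul_X p k hp => rcases k with _ | k <;> simp [hp]

theorem eq_single_of_weight_bideg {s : ℕ →₀ ℕ} {j : ℕ}
    (h : Finsupp.weight bideg s = (1, (j : ℤ))) : s = Finsupp.single j 1 := by
  have hdeg : s.degree = 1 := by
    have h1 := congrArg Prod.fst h
    rw [weight_bideg] at h1
    rw [← Nat.cast_inj (R := ℤ), Finsupp.degree_apply]
    simpa [Finsupp.sum] using h1
  obtain ⟨i, hi⟩ : s.support.Nonempty := by
    rw [Finsupp.support_nonempty_iff]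
    rintro rfl
    simp at hdeg
  have hs : s = Finsupp.single i 1 := by
    have h0 := congrArg Finsupp.degree (Finsupp.sub_single_one_add_cancel hi)
    rw [map_add, Finsupp.degree_single, hdeg, add_eq_right, Finsupp.degree_eq_zero_iff] at h0
    rw [← Finsupp.sub_single_one_add_cancel hi, h0, zero_add]
  rw [hs, Finsupp.weight_single, one_smul, Prod.mk.injEq] at h
  rw [hs, show i = j by exact_mod_cast h.2]

theorem eq_zero_of_isWeightedHomogeneous_one {k : ℕ}
    (hK : IsWeightedHomogeneous bideg K (1, (k + 1 : ℕ))) (hKD : lowering K = 0) : K = 0 := by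
  rw [hK.eq_monomial_of_unique_weight fun s => eq_single_of_weight_bideg, ← C_mul_X_eq_monomial]
    at hKD ⊢
  simp only [Derivation.leibniz, lowering_X_succ, derivation_C, smul_eq_mul, mul_zero, add_zero,
    mul_eq_zero, X_ne_zero, or_false] at hKD
  rw [hKD, zero_mul]

theorem exists_gammaMap_eq_of_shiftDown (hK : IsWeightedHomogeneous bideg K (d, e))
    (hKD : lowering K = 0) (hQ : IsWeightedHomogeneous bideg Q (d - 1, e - d + 1))
    (h : gammaMap lowering (lowering Q) = shiftDown K) :
    ∃ Q', IsWeightedHomogeneous bideg Q' (d - 1, e) ∧ gammaMap lowering Q' = K := by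
  set Q₃ := -shiftUp Q
  have hQ₃ : IsWeightedHomogeneous bideg Q₃ (d - 1, e) := by
    simpa using (isWeightedHomogeneous_shiftUp hQ).neg
  have hdiv : shiftDown (K - gammaMap lowering Q₃) = 0 := by
    rw [map_sub, shiftDown_gammaMap, map_neg, shiftDown_shiftUp, map_neg, gammaMap_neg, neg_neg,
      h, sub_self]
  obtain ⟨K₁, hK₁⟩ := X_zero_dvd_of_shiftDown_eq_zero hdiv
  have hK₁W : IsWeightedHomogeneous bideg K₁ (d - 1, e) := by
    refine IsWeightedHomogeneous.of_X_mul (i := 0) ?_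
    rw [← hK₁]
    simpa using hK.sub (by simpa using isWeightedHomogeneous_gammaMap hQ₃)
  have hK₁D : lowering K₁ = 0 := by
    have := congrArg lowering hK₁
    simpa [hKD, lowering_gammaMap] using this.symm
  exact ⟨Q₃ + K₁, hQ₃.add hK₁W, by
    rw [gammaMap_add, gammaMap_of_lowering_eq_zero hK₁D, ← hK₁, add_sub_cancel]⟩

theorem exists_gammaMap_eq (hde : (d, e) ≠ (0, 0)) (hK : IsWeightedHomogeneous bideg K (d, e))
    (hKD : lowering K = 0) :
    ∃ Q, IsWeightedHomogeneous bideg Q (d - 1, e) ∧ gammaMap lowering Q = K := by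
  obtain ⟨n, hn⟩ : ∃ n : ℕ, e < n := ⟨e.toNat + 1, by omega⟩
  induction n generalizing d e K with
  | zero =>
    obtain rfl : K = 0 := by
      by_contra hK0
      have := (nonneg_of_isWeightedHomogeneous hK hK0).2
      omega
    exact ⟨0, isWeightedHomogeneous_zero ℚ bideg _, gammaMap_zero⟩
  | succ n ih =>
    rcases eq_or_ne K 0 with rfl | hK0
    · exact ⟨0, isWeightedHomogeneous_zero ℚ bideg _, gammaMap_zero⟩
    have hd := (nonneg_of_isWeightedHomogeneous hK hK0).1
    have hd0 : d ≠ 0 := by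
      rintro rfl
      exact hK0 (eq_zero_of_isWeightedHomogeneous_zero hK fun he => hde (by rw [he]))
    obtain ⟨Q₁, hQ₁, hγ⟩ := ih (K := shiftDown K) (by simp only [ne_eq, Prod.mk.injEq]; omega)
      (isWeightedHomogeneous_shiftDown hK) (by rw [← shiftDown_lowering, hKD, map_zero])
      (by omega)
    obtain ⟨Q₂, hQ₂, rfl⟩ := exists_lowering_eq hQ₁ fun h01 => by
      obtain ⟨rfl, rfl⟩ : d = 1 ∧ e = 1 := by simp only [Prod.mk.injEq] at h01; omega
      exact absurd (eq_zero_of_isWeightedHomogeneous_one (k := 0) hK hKD) hK0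
    exact exists_gammaMap_eq_of_shiftDown hK hKD (by simpa using hQ₂) hγ

end Bigraded

open Bigraded in
/-- For every bidegree `(d,e) ≠ (0,0)` the sequence
`R^{d-1,e} →γ R^{d,e} →∂ R^{d,e-1} →ε ℚ[0]^{d,e-1} → 0` is exact, where `ℚ[0]^{d,e-1}`
is `ℚ` if `(d, e-1) = (0,0)` and `0` otherwise. -/
theorem bigraded_sequence_exact
    (D : Derivation ℚ (MvPolynomial ℕ ℚ) (MvPolynomial ℕ ℚ))
    (hD0 : D (X 0) = 0) (hD : ∀ k : ℕ, D (X (k + 1)) = X k)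
    (d e : ℤ) (hde : (d, e) ≠ (0, 0)) :
    -- `γ` maps `R^{d-1,e}` into `R^{d,e}` and its image lies in `ker ∂`
    (∀ Q, Bihom (d - 1) e Q → Bihom d e (gammaMap D Q) ∧ D (gammaMap D Q) = 0) ∧
    -- exactness at `R^{d,e}`: `ker ∂ ⊆ im γ`
    (∀ P, Bihom d e P → D P = 0 → ∃ Q, Bihom (d - 1) e Q ∧ gammaMap D Q = P) ∧
    -- `∂` maps `R^{d,e}` into `R^{d,e-1}` and its image lies in `ker ε`
    (∀ P, Bihom d e P →
      Bihom d (e - 1) (D P) ∧ ((d, e - 1) = (0, 0) → constantCoeff (D P) = 0)) ∧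
    -- exactness at `R^{d,e-1}`: `ker ε ⊆ im ∂`
    (∀ P, Bihom d (e - 1) P → ((d, e - 1) = (0, 0) → constantCoeff P = 0) →
      ∃ Q, Bihom d e Q ∧ D Q = P) ∧
    -- exactness at `ℚ[0]^{d,e-1}`: `ε` is surjective onto it
    ((d, e - 1) = (0, 0) → ∀ q : ℚ, ∃ P, Bihom d (e - 1) P ∧ constantCoeff P = q) := by
  obtain rfl : D = lowering := derivation_ext fun k => by rcases k with _ | k <;> simp [hD0, hD]
  simp only [bihom_iff]
  refine ⟨fun Q hQ => ⟨by simpa using isWeightedHomogeneous_gammaMap hQ, lowering_gammaMap Q⟩,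
    fun P hP hPD => exists_gammaMap_eq hde hP hPD,
    fun P hP => ⟨isWeightedHomogeneous_lowering hP, fun _ => constantCoeff_lowering P⟩,
    fun P hP hε => by simpa using exists_lowering_eq hP hε, fun h q => ?_⟩
  exact ⟨C q, h ▸ isWeightedHomogeneous_C bideg q, constantCoeff_C ℕ q⟩
end

section
/- Let H = ℚ[z₁, z₂, …] and fix a nonzero rational number r. Let ∂ be the derivation on H with ∂(z_j) = z_{j-1} for j > 1 and ∂(z₁) = r. Then ∂: H → H is surjective. -/
/-!
`∂` is locally nilpotent: the elements killed by some iterate of `∂` form a subalgebra, and it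
contains every `z_j`, since `∂^(j-1) z_j = r` is a constant. Moreover `s = z₁ / r` is a slice,
`∂ s = 1`. For a locally nilpotent derivation with a slice, a preimage of `p` with `∂^[n] p = 0`
is built by induction on `n`: integrating `s^k p` by parts,
`∂ (s^(k+1) p) = (k+1) s^k p + s^(k+1) ∂p`, reduces it to integrating `s^(k+1) ∂p`.
-/

open MvPolynomial

namespace Derivation

section LocallyNilpotent

variable {R A : Type*} [CommSemiring R] [CommSemiring A] [Algebra R A] (D : Derivation R A A)

theorem iterate_eq_zero_of_le {a : A} {m n : ℕ} (ha : D^[m] a = 0) (hmn : m ≤ n) :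
    D^[n] a = 0 := by
  obtain ⟨k, rfl⟩ := Nat.exists_eq_add_of_le' hmn
  rw [Function.iterate_add_apply, ha, iterate_map_zero]

theorem iterate_add_mul_eq_zero {a b : A} {m n : ℕ} (ha : D^[m] a = 0) (hb : D^[n] b = 0) :
    D^[m + n] (a * b) = 0 := by
  induction m generalizing n a b with
  | zero => rw [Function.iterate_zero_apply] at ha; rw [ha, zero_mul, iterate_map_zero]
  | succ m ihm =>
    induction n generalizing a b with
    | zero => rw [Function.iterate_zero_apply] at hb; rw [hb, mul_zero, iterate_map_zero]
    | succ n ihn =>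
      have hDa : D^[m + n + 1] (D a * b) = 0 := ihm (by rwa [← Function.iterate_succ_apply]) hb
      have hDb : D^[m + 1 + n] (a * D b) = 0 := ihn ha (by rwa [← Function.iterate_succ_apply])
      rw [← add_assoc, Function.iterate_succ_apply, leibniz, smul_eq_mul, smul_eq_mul,
        iterate_map_add, hDb, mul_comm, Nat.add_right_comm, hDa, add_zero]

def nilSubalgebra : Subalgebra R A where
  carrier := {a | ∃ n, D^[n] a = 0}
  mul_mem' := fun ⟨_, ha⟩ ⟨_, hb⟩ => ⟨_, D.iterate_add_mul_eq_zero ha hb⟩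
  add_mem' := fun {_ _} ⟨m, ha⟩ ⟨n, hb⟩ => ⟨max m n, by
    rw [iterate_map_add, D.iterate_eq_zero_of_le ha (le_max_left m n),
      D.iterate_eq_zero_of_le hb (le_max_right m n), add_zero]⟩
  algebraMap_mem' r := ⟨1, D.map_algebraMap r⟩

theorem mem_nilSubalgebra {a : A} : a ∈ D.nilSubalgebra ↔ ∃ n, D^[n] a = 0 := Iff.rfl

end LocallyNilpotent

section Slice

variable {A : Type*} [CommRing A] [Algebra ℚ A] (D : Derivation ℚ A A)

theorem exists_apply_eq_pow_mul_of_iterate_eq_zero {s p : A} (hs : D s = 1) {n : ℕ}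
    (hp : D^[n] p = 0) (k : ℕ) : ∃ q, D q = s ^ k * p := by
  induction n generalizing p k with
  | zero => exact ⟨0, by rw [Function.iterate_zero_apply] at hp; rw [hp, map_zero, mul_zero]⟩
  | succ n ih =>
    obtain ⟨q, hq⟩ := ih (Function.iterate_succ_apply _ _ _ ▸ hp) (k + 1)
    have hparts : D (s ^ (k + 1) * p) = ((k + 1 : ℕ) : ℚ) • (s ^ k * p) + s ^ (k + 1) * D p := by
      rw [leibniz, leibniz_pow, hs, Nat.add_sub_cancel, smul_eq_mul, smul_eq_mul, smul_eq_mul,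
        mul_one, Nat.cast_smul_eq_nsmul, nsmul_eq_mul, nsmul_eq_mul]
      ring
    refine ⟨((k + 1 : ℕ) : ℚ)⁻¹ • (s ^ (k + 1) * p - q), ?_⟩
    rw [D.map_smul, map_sub, hparts, hq, add_sub_cancel_right, smul_smul,
      inv_mul_cancel₀ (by positivity), one_smul]

theorem surjective_of_apply_eq_one_of_nilSubalgebra_eq_top {s : A} (hs : D s = 1)
    (hD : D.nilSubalgebra = ⊤) : Function.Surjective D := fun p => by
  obtain ⟨n, hn⟩ := (D.mem_nilSubalgebra).1 (hD ▸ Algebra.mem_top : p ∈ D.nilSubalgebra)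
  simpa using D.exists_apply_eq_pow_mul_of_iterate_eq_zero hs hn 0

end Slice

end Derivation

theorem MvPolynomial.nilSubalgebra_eq_top_of_X_mem {σ R : Type*} [CommSemiring R]
    (D : Derivation R (MvPolynomial σ R) (MvPolynomial σ R)) (hX : ∀ i, X i ∈ D.nilSubalgebra) :
    D.nilSubalgebra = ⊤ :=
  top_le_iff.1 <| adjoin_range_X (R := R) ▸ Algebra.adjoin_le (Set.range_subset_iff.2 hX)

/-- Let `H = ℚ[z₁, z₂, …]` (variable `X j` stands for `z_{j+1}`), `r ≠ 0` a rational,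
and `∂` the derivation with `∂(z_j) = z_{j-1}` for `j > 1` and `∂(z₁) = r`.
Then `∂` is surjective. -/
theorem deriv_surjective_of_rank_ne_zero (r : ℚ) (hr : r ≠ 0)
    (D : Derivation ℚ (MvPolynomial ℕ ℚ) (MvPolynomial ℕ ℚ))
    (hD1 : D (X 0) = C r) (hD : ∀ j : ℕ, D (X (j + 1)) = X j) :
    Function.Surjective ⇑D := by
  have hX : ∀ j, D^[j + 2] (X j) = 0 := by
    intro j
    induction j with
    | zero => simp [hD1, ← algebraMap_eq]
    | succ j ih => rw [Function.iterate_succ_apply, hD, ih]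
  have hs : D (r⁻¹ • X 0) = 1 := by
    rw [D.map_smul, hD1, smul_eq_C_mul, ← C_mul, inv_mul_cancel₀ hr, C_1]
  exact D.surjective_of_apply_eq_one_of_nilSubalgebra_eq_top hs
    (nilSubalgebra_eq_top_of_X_mem D fun j => ⟨j + 2, hX j⟩)
end

section
/- Newton-type recursion: define classes z_k in ℚ[y₁, y₂, …] by z_k = (-1)^{k-1} y_k/(k-1)! + ∑_{i=1}^{k-1} ((-1)^{i+k-1} i!/k!) y_{k-i} z_i for k ≥ 1. Fix r ∈ ℚ and let ∂ be the derivation on ℚ[y₁, y₂, …] with ∂(y_j) = (r - j + 1) y_{j-1} for all j ≥ 1 (with y₀ = 1). Then ∂(z₁) = r and ∂(z_j) = z_{j-1} for all j > 1. -/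
open MvPolynomial

/-- In `ℚ[y₁, y₂, …]`, `yGen j` denotes `y_j`, with `y₀ = 1`
(variable `X (j-1)` stands for `y_j` for `j ≥ 1`). -/
noncomputable def yGen (j : ℕ) : MvPolynomial ℕ ℚ :=
  if j = 0 then 1 else X (j - 1)

/-!
Put `Q_b = (-1)^b (b+1)! z_{b+1}`. Clearing denominators, the recursion for `z` is Newton's
identity `∑_{a+b=n} y_a Q_b = (n+1) y_{n+1}`, i.e. `Y Q = Y'` for `Y = ∑ y_a t^a`,
`Q = ∑ Q_b t^b`. Applying `∂` to Newton's identity in degree `n + 1` and substituting Newton's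
identity in degree `n` shows that `Y` times the series of `∂Q_b - E_b` vanishes, where
`E_0 = r` and `E_{b+1} = -(b+2) Q_b`. As `y_0 = 1`, `Y` is a unit, so `∂Q_b = E_b`, which after
rescaling is `∂z_1 = r` and `∂z_{b+2} = z_{b+1}`.
-/

open Finset Nat

theorem eq_zero_of_sum_antidiagonal_mul_eq_zero {R : Type*} [CommRing R] {y e : ℕ → R}
    (hy0 : y 0 = 1) (h : ∀ n, ∑ p ∈ antidiagonal n, y p.1 * e p.2 = 0) : e = 0 := by
  have hunit : IsUnit (PowerSeries.mk y) := by
    simp [PowerSeries.isUnit_iff_constantCoeff, hy0]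
  have hprod : PowerSeries.mk y * PowerSeries.mk e = 0 := by
    ext n; simp [PowerSeries.coeff_mul, h]
  funext n
  simpa using congrArg (PowerSeries.coeff n) (hunit.mul_right_eq_zero.mp hprod)

section

variable {A : Type*} [CommRing A] [Algebra ℚ A]

/-- When the `y_a` are Chern classes and the `z_k` the Chern character components, `(b+1)! z_{b+1}`
is the power sum `p_{b+1}` of the Chern roots. -/
def signedPowerSum (z : ℕ → A) (b : ℕ) : A := ((-1 : ℚ) ^ b * (b + 1)! : ℚ) • z (b + 1)

theorem sum_antidiagonal_mul_signedPowerSum {y z : ℕ → A} (hy0 : y 0 = 1)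
    (hz : ∀ k : ℕ, 1 ≤ k → z k = ((-1 : ℚ) ^ (k - 1) / (k - 1)! : ℚ) • y k +
      ∑ i ∈ Ico 1 k, ((-1 : ℚ) ^ (i + k - 1) * i ! / k ! : ℚ) • (y (k - i) * z i)) (n : ℕ) :
    ∑ p ∈ antidiagonal n, y p.1 * signedPowerSum z p.2 = (n + 1 : ℚ) • y (n + 1) := by
  rw [← Nat.sum_antidiagonal_swap, Nat.sum_antidiagonal_eq_sum_range_succ_mk, sum_range_succ]
  simp only [Prod.swap, Nat.sub_self, hy0, one_mul]
  rw [signedPowerSum, hz (n + 1) (by omega), sum_Ico_eq_sum_range, smul_add, smul_sum]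
  have hsq : (-1 : ℚ) ^ (n * 2) = 1 := by rw [pow_mul', neg_one_sq, one_pow]
  have hfac : ((n + 1)! : ℚ) = (n + 1) * n ! := by push_cast [Nat.factorial_succ]; ring
  have hlead : ((-1 : ℚ) ^ n * (n + 1)!) * ((-1) ^ n / n !) = n + 1 := by
    rw [hfac]
    field_simp
    linear_combination hsq
  have hterm (x : ℕ) :
      ((-1 : ℚ) ^ n * (n + 1)!) * ((-1) ^ (1 + x + (n + 1) - 1) * (1 + x)! / (n + 1)!) =
        -((-1) ^ x * (x + 1)!) := by
    rw [show 1 + x + (n + 1) - 1 = x + n + 1 by omega, add_comm 1 x, pow_succ, pow_add]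
    field_simp
    linear_combination -hsq
  rw [Nat.add_sub_cancel, smul_smul, hlead, add_left_comm, add_eq_left, ← sum_add_distrib]
  refine sum_eq_zero fun x _ => ?_
  rw [smul_smul, hterm, show n + 1 - (1 + x) = n - x by omega, add_comm 1 x, signedPowerSum,
    mul_smul_comm, neg_smul, add_neg_cancel]

theorem Derivation.map_eq_of_newton_identity (D : Derivation ℚ A A) (r : ℚ) {y Q : ℕ → A}
    (hy0 : y 0 = 1) (hDy : ∀ a : ℕ, D (y (a + 1)) = (r - a) • y a)
    (hN : ∀ n : ℕ, ∑ p ∈ antidiagonal n, y p.1 * Q p.2 = (n + 1 : ℚ) • y (n + 1)) :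
    D (Q 0) = algebraMap ℚ A r ∧ ∀ b : ℕ, D (Q (b + 1)) = -((b + 2 : ℚ) • Q b) := by
  let expected : ℕ → A
    | 0 => algebraMap ℚ A r
    | b + 1 => -((b + 2 : ℚ) • Q b)
  suffices h : ∀ b, D (Q b) = expected b from ⟨h 0, fun b => h (b + 1)⟩
  have hDN (n : ℕ) : ∑ p ∈ antidiagonal n, y p.1 * D (Q p.2) +
      ∑ p ∈ antidiagonal n, Q p.2 * D (y p.1) = ((n + 1 : ℚ) * (r - n)) • y n := by
    simpa only [map_sum, Derivation.leibniz, smul_eq_mul, D.map_smul, hDy, sum_add_distrib,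
      mul_smul] using congrArg D (hN n)
  have hD1 : D (y 0) = 0 := by rw [hy0, Derivation.map_one_eq_zero]
  have key : ∀ n, ∑ p ∈ antidiagonal n, y p.1 * (D (Q p.2) - expected p.2) = 0 := by
    rintro (_ | m)
    · simpa [hy0, hD1, expected, sub_eq_zero, Algebra.algebraMap_eq_smul_one] using hDN 0
    have hQDy : ∑ p ∈ antidiagonal (m + 1), Q p.2 * D (y p.1) =
        ∑ p ∈ antidiagonal m, (r - p.1) • (y p.1 * Q p.2) := by
      rw [Nat.sum_antidiagonal_succ]
      simp only [hD1, hDy, zero_mul, zero_add, mul_smul_comm, mul_comm]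
    have hyE : ∑ p ∈ antidiagonal (m + 1), y p.1 * expected p.2 =
        r • y (m + 1) - ∑ p ∈ antidiagonal m, (p.2 + 2 : ℚ) • (y p.1 * Q p.2) := by
      rw [Nat.sum_antidiagonal_succ']
      simp only [expected, mul_neg, mul_smul_comm, sum_neg_distrib, sub_eq_add_neg,
        ← Algebra.commutes, ← Algebra.smul_def]
    have hcoef : ∑ p ∈ antidiagonal m, (r - p.1) • (y p.1 * Q p.2) -
        ∑ p ∈ antidiagonal m, (p.2 + 2 : ℚ) • (y p.1 * Q p.2) =
        (r - m - 2) • ∑ p ∈ antidiagonal m, y p.1 * Q p.2 := by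
      rw [← sum_sub_distrib, smul_sum]
      refine sum_congr rfl fun p hp => ?_
      have hm : (p.1 : ℚ) + p.2 = m := by exact_mod_cast mem_antidiagonal.mp hp
      rw [← sub_smul, ← hm]
      ring_nf
    simp only [mul_sub, sum_sub_distrib]
    rw [hN m] at hcoef
    linear_combination (norm := module) hDN (m + 1) - hQDy - hyE - hcoef
  have := eq_zero_of_sum_antidiagonal_mul_eq_zero (e := fun b => D (Q b) - expected b) hy0 key
  exact fun b => sub_eq_zero.mp (congrFun this b)

theorem Derivation.map_succ_of_map_signedPowerSum (D : Derivation ℚ A A) {z : ℕ → A} {b : ℕ}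
    (h : D (signedPowerSum z (b + 1)) = -((b + 2 : ℚ) • signedPowerSum z b)) :
    D (z (b + 2)) = z (b + 1) := by
  have hc : ((-1 : ℚ) ^ (b + 1) * (b + 2)!) ≠ 0 :=
    mul_ne_zero (pow_ne_zero _ (by norm_num)) (by positivity)
  apply smul_right_injective A hc
  calc ((-1 : ℚ) ^ (b + 1) * (b + 2)!) • D (z (b + 2))
      = -((b + 2 : ℚ) • signedPowerSum z b) := by simpa [signedPowerSum] using h
    _ = ((-1 : ℚ) ^ (b + 1) * (b + 2)!) • z (b + 1) := by
      rw [signedPowerSum, smul_smul, ← neg_smul]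
      congr 1
      push_cast [Nat.factorial_succ]
      ring

end

/-- Newton-type recursion: if `z_k = (-1)^{k-1} y_k/(k-1)! +
∑_{i=1}^{k-1} ((-1)^{i+k-1} i!/k!) y_{k-i} z_i` for `k ≥ 1`, and `∂` is the derivation
with `∂(y_j) = (r - j + 1) y_{j-1}` (with `y₀ = 1`), then `∂(z₁) = r` and
`∂(z_j) = z_{j-1}` for `j > 1`. -/
theorem newton_recursion_deriv (r : ℚ)
    (D : Derivation ℚ (MvPolynomial ℕ ℚ) (MvPolynomial ℕ ℚ))
    (hD : ∀ j : ℕ, 1 ≤ j → D (yGen j) = C (r - (j : ℚ) + 1) * yGen (j - 1))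
    (z : ℕ → MvPolynomial ℕ ℚ)
    (hz : ∀ k : ℕ, 1 ≤ k →
      z k = C ((-1 : ℚ) ^ (k - 1) / (Nat.factorial (k - 1) : ℚ)) * yGen k +
        ∑ i ∈ Finset.Ico 1 k,
          C ((-1 : ℚ) ^ (i + k - 1) * (Nat.factorial i : ℚ) / (Nat.factorial k : ℚ)) *
            (yGen (k - i) * z i)) :
    D (z 1) = C r ∧ ∀ j : ℕ, 1 < j → D (z j) = z (j - 1) := by
  have hy0 : yGen 0 = 1 := rfl
  have hDy (a : ℕ) : D (yGen (a + 1)) = (r - a) • yGen a := by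
    rw [hD (a + 1) (by omega), C_mul']
    push_cast
    ring_nf
  simp only [C_mul'] at hz
  obtain ⟨h0, hsucc⟩ :=
    D.map_eq_of_newton_identity r hy0 hDy (sum_antidiagonal_mul_signedPowerSum hy0 hz)
  refine ⟨by simpa [signedPowerSum] using h0, fun j hj => ?_⟩
  obtain ⟨b, rfl⟩ : ∃ b, j = b + 2 := ⟨j - 2, by omega⟩
  exact D.map_succ_of_map_signedPowerSum (hsucc b)
end
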